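/- arXiv:2605.08500 — 4 statements merged into one kernel-verified Lean document; each statement's English description precedes it below -/
import Mathlib

section
/- Let A be an s×s proper binary matrix and let F be a finite field with |F| ≥ 3. Then there exists an F-labeling H of A, i.e., an s×s matrix H over F with H(i,j) ≠ 0 if and only if A(i,j) = 1, such that det H ≠ 0. -/
/-!
Start from the permutation matrix of `σ⁻¹`, whose support is exactly the transversal
`{(σ t, t)}`, and switch on the remaining entries of `A` one at a time. Changing entry `(i, j)`
from `0` to `x` changes the determinant by `x` times the `(i, j)` cofactor, so `x ↦ det` is
affine with nonzero value at `0` and has at most one root; with at least three field elements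
some `x` avoids both `0` and that root.
-/

namespace Matrix

variable {n F : Type*} [DecidableEq n]

theorem permMatrix_apply_ne_zero_iff [Field F] (σ : Equiv.Perm n) (a b : n) :
    σ.permMatrix F a b ≠ 0 ↔ σ a = b := by
  simp [PEquiv.toMatrix_apply]

theorem det_permMatrix_ne_zero [Fintype n] [Field F] (σ : Equiv.Perm n) :
    (σ.permMatrix F).det ≠ 0 := by
  rcases Int.units_eq_one_or (Equiv.Perm.sign σ) with h | h <;> simp [h]

variable [Fintype n]

theorem det_add_single [CommRing F] (H : Matrix n n F) (i j : n) (x : F) :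
    (H + single i j x).det = H.det + x * adjugate H j i := by
  have hrow : H + single i j x = H.updateRow i (H i + x • Pi.single j 1) := by
    ext a b
    obtain rfl | ha := eq_or_ne a i
    · obtain rfl | hb := eq_or_ne b j <;> simp [*, Ne.symm]
    · simp [ha, Ne.symm ha]
  rw [hrow, det_updateRow_add, det_updateRow_smul, updateRow_eq_self, adjugate_apply]

variable [Field F]

theorem exists_ne_zero_det_add_single_ne_zero (hF : 3 ≤ ENat.card F) {H : Matrix n n F}
    (hH : H.det ≠ 0) (i j : n) : ∃ x ≠ 0, (H + single i j x).det ≠ 0 := by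
  obtain ⟨x, hx0, hx⟩ := ENat.exists_ne_ne_of_three_le hF 0 (-H.det / adjugate H j i)
  refine ⟨x, hx0, ?_⟩
  rw [det_add_single]
  by_cases hc : adjugate H j i = 0
  · simpa [hc] using hH
  · contrapose! hx
    field_simp
    linear_combination hx

theorem exists_det_ne_zero_support_insert (hF : 3 ≤ ENat.card F) {H : Matrix n n F}
    (hH : H.det ≠ 0) (i j : n) :
    ∃ H' : Matrix n n F, (∀ a b, H' a b ≠ 0 ↔ H a b ≠ 0 ∨ (a, b) = (i, j)) ∧ H'.det ≠ 0 := by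
  by_cases hij : H i j = 0
  · obtain ⟨x, hx0, hdet⟩ := exists_ne_zero_det_add_single_ne_zero hF hH i j
    refine ⟨H + single i j x, fun a b => ?_, hdet⟩
    by_cases hab : (a, b) = (i, j)
    · obtain ⟨rfl, rfl⟩ := Prod.ext_iff.mp hab
      simp [hij, hx0]
    · have : single i j x a b = 0 :=
        single_apply_of_ne _ _ _ _ _ fun h => hab (by rw [h.1, h.2])
      simp [this, hab]
  · refine ⟨H, fun a b => ⟨Or.inl, ?_⟩, hH⟩
    rintro (h | h)
    · exact h
    · obtain ⟨rfl, rfl⟩ := Prod.mk.inj h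
      exact hij

theorem exists_det_ne_zero_support_union (hF : 3 ≤ ENat.card F) {H : Matrix n n F}
    (hH : H.det ≠ 0) (T : Finset (n × n)) :
    ∃ H' : Matrix n n F, (∀ a b, H' a b ≠ 0 ↔ H a b ≠ 0 ∨ (a, b) ∈ T) ∧ H'.det ≠ 0 := by
  induction T using Finset.induction_on with
  | empty => exact ⟨H, by simp, hH⟩
  | insert p T _ ih =>
    obtain ⟨H₁, hH₁, hdet₁⟩ := ih
    obtain ⟨H₂, hH₂, hdet₂⟩ := exists_det_ne_zero_support_insert hF hdet₁ p.1 p.2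
    refine ⟨H₂, fun a b => ?_, hdet₂⟩
    rw [hH₂, hH₁, Finset.mem_insert]
    tauto

end Matrix

/-- A proper square binary matrix admits, over any finite field with
at least 3 elements, a labeling with nonzero determinant. -/
theorem proper_exists_nonsingular_labeling {s : ℕ} (A : Matrix (Fin s) (Fin s) Bool)
    (hproper : ∃ σ : Equiv.Perm (Fin s), ∀ t : Fin s, A (σ t) t = true)
    (F : Type*) [Field F] [Fintype F] (hF : 3 ≤ Fintype.card F) :
    ∃ H : Matrix (Fin s) (Fin s) F,
      (∀ i j, H i j ≠ 0 ↔ A i j = true) ∧ H.det ≠ 0 := by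
  obtain ⟨σ, hσ⟩ := hproper
  have hF' : 3 ≤ ENat.card F := by rw [ENat.card_eq_coe_fintype_card]; exact_mod_cast hF
  obtain ⟨H, hH, hdet⟩ := Matrix.exists_det_ne_zero_support_union hF'
    (Matrix.det_permMatrix_ne_zero σ⁻¹) {p | A p.1 p.2 = true}
  refine ⟨H, fun i j => ?_, hdet⟩
  rw [hH, Matrix.permMatrix_apply_ne_zero_iff, Finset.mem_filter_univ]
  constructor
  · rintro (h | h)
    · simpa [← h] using hσ (σ⁻¹ i)
    · exact h
  · exact Or.inr
end

section
/- Let B be an r×s binary matrix with r ≥ s that is weakly proper, i.e., at least one s×s submatrix of B obtained by selecting s of its rows is proper. Let F be a finite field with |F| ≥ 3. Then there exists an F-labeling H of B (an r×s matrix over F with H(i,j) ≠ 0 iff B(i,j) = 1) whose s columns are linearly independent over F, i.e., rank H = s. -/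
open Matrix

-- Step 1: diagonal-true square case
theorem diag_lemma (F : Type*) [Field F] [Fintype F] (hF : 3 ≤ Fintype.card F) :
    ∀ (s : ℕ) (A : Matrix (Fin s) (Fin s) Bool), (∀ t, A t t = true) →
    ∃ M : Matrix (Fin s) (Fin s) F, (∀ i j, M i j ≠ 0 ↔ A i j = true) ∧ M.det ≠ 0 := by
  intro s
  induction s with
  | zero =>
    intro A _
    exact ⟨0, fun i j => i.elim0, by simp [Matrix.det_fin_zero]⟩
  | succ n ih =>
    intro A hA
    obtain ⟨M₀, hM₀lab, hM₀det⟩ := ih (A.submatrix Fin.castSucc Fin.castSucc)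
      (fun t => hA t.castSucc)
    classical
    -- family of candidate matrices parameterized by corner entry x
    set Mx : F → Matrix (Fin (n+1)) (Fin (n+1)) F := fun x =>
      Matrix.of fun i j =>
        if hi : i = Fin.last n then
          (if j = Fin.last n then x else if A i j then 1 else 0)
        else
          (if hj : j = Fin.last n then (if A i j then 1 else 0)
           else M₀ (i.castPred hi) (j.castPred hj)) with hMx
    have hrow : ∀ x y : F, ∀ i j, i ≠ Fin.last n → Mx x i j = Mx y i j := by
      intro x y i j hi
      simp [hMx, hi]
    have hcol : ∀ x y : F, ∀ j, j ≠ Fin.last n → Mx x (Fin.last n) j = Mx y (Fin.last n) j := by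
      intro x y j hj
      simp [hMx, hj]
    have hsub : ∀ x : F, (Mx x).submatrix Fin.castSucc Fin.castSucc = M₀ := by
      intro x
      ext i j
      have hi : (Fin.castSucc i) ≠ Fin.last n := Fin.ne_of_lt (Fin.castSucc_lt_last i)
      have hj : (Fin.castSucc j) ≠ Fin.last n := Fin.ne_of_lt (Fin.castSucc_lt_last j)
      simp [hMx, hi, hj]
    -- determinant as affine function of x
    have hdet : ∀ x : F, (Mx x).det = x * M₀.det + ((Mx 0).det) := by
      intro x
      have e1 := Matrix.det_succ_row (Mx x) (Fin.last n)
      have e2 := Matrix.det_succ_row (Mx 0) (Fin.last n)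
      have hminor : ∀ (y : F) (j : Fin (n+1)),
          ((Mx y).submatrix (Fin.last n).succAbove j.succAbove).det =
          ((Mx 0).submatrix (Fin.last n).succAbove j.succAbove).det := by
        intro y j
        congr 1
        ext a b
        simp only [Matrix.submatrix_apply]
        exact hrow y 0 _ _ (by
          rw [Fin.succAbove_last]
          exact Fin.ne_of_lt (Fin.castSucc_lt_last a))
      have hlastlast : ∀ y : F, Mx y (Fin.last n) (Fin.last n) = y := by
        intro y; simp [hMx]
      have hminorlast : ∀ y : F,
          ((Mx y).submatrix (Fin.last n).succAbove (Fin.last n).succAbove).det = M₀.det := by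
        intro y
        rw [Fin.succAbove_last, hsub]
      have hsign : ((-1 : F)) ^ ((Fin.last n : ℕ) + (Fin.last n : ℕ)) = 1 :=
        Even.neg_one_pow ⟨n, by simp [Fin.val_last, two_mul]⟩
      rw [e1, e2]
      rw [← Finset.sum_erase_add _ _ (Finset.mem_univ (Fin.last n)),
        ← Finset.sum_erase_add _ _ (Finset.mem_univ (Fin.last n))]
      have hS : ∑ j ∈ Finset.univ.erase (Fin.last n),
            (-1 : F) ^ ((Fin.last n : ℕ) + (j : ℕ)) * Mx x (Fin.last n) j *
              ((Mx x).submatrix (Fin.last n).succAbove j.succAbove).det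
          = ∑ j ∈ Finset.univ.erase (Fin.last n),
            (-1 : F) ^ ((Fin.last n : ℕ) + (j : ℕ)) * Mx 0 (Fin.last n) j *
              ((Mx 0).submatrix (Fin.last n).succAbove j.succAbove).det := by
        refine Finset.sum_congr rfl fun j hj => ?_
        rw [hcol x 0 j (Finset.ne_of_mem_erase hj), hminor x j]
      rw [hS, hlastlast, hlastlast, hminorlast, hminorlast, hsign]
      ring
    -- choose a good x
    have hcard : ¬ (Finset.univ : Finset F) ⊆ {0, -((Mx 0).det) * (M₀.det)⁻¹} := by
      intro hsubset
      have := Finset.card_le_card hsubset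
      rw [Finset.card_univ] at this
      have h2 : ({0, -((Mx 0).det) * (M₀.det)⁻¹} : Finset F).card ≤ 2 :=
        Finset.card_insert_le _ _ |>.trans (by simp)
      omega
    obtain ⟨x, -, hx⟩ := Finset.not_subset.mp hcard
    simp only [Finset.mem_insert, Finset.mem_singleton, not_or] at hx
    obtain ⟨hx0, hxbad⟩ := hx
    refine ⟨Mx x, ?_, ?_⟩
    · intro i j
      by_cases hi : i = Fin.last n
      · subst hi
        by_cases hj : j = Fin.last n
        · subst hj
          simp [hMx, hx0, hA]
        · simp only [hMx, Matrix.of_apply, dif_pos rfl, if_neg hj]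
          by_cases hAij : A (Fin.last n) j = true <;> simp [hAij]
      · by_cases hj : j = Fin.last n
        · subst hj
          simp only [hMx, Matrix.of_apply, dif_neg hi, dif_pos rfl]
          by_cases hAij : A i (Fin.last n) = true <;> simp [hAij]
        · have : Mx x i j = M₀ (i.castPred hi) (j.castPred hj) := by simp [hMx, hi, hj]
          rw [this]
          have := hM₀lab (i.castPred hi) (j.castPred hj)
          simpa using this
    · rw [hdet x]
      intro hzero
      apply hxbad
      field_simp
      linear_combination hzero

/-- A weakly proper `r × s` binary matrix (`r ≥ s`, some `s × s`
row-submatrix is proper) admits, over any finite field with at least 3 elements,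
a labeling with linearly independent columns, i.e. of rank `s`. -/
theorem weakly_proper_exists_full_rank_labeling {r s : ℕ} (hrs : s ≤ r)
    (B : Matrix (Fin r) (Fin s) Bool)
    (hwp : ∃ f : Fin s → Fin r, Function.Injective f ∧
      ∃ σ : Equiv.Perm (Fin s), ∀ t : Fin s, B (f (σ t)) t = true)
    (F : Type*) [Field F] [Fintype F] (hF : 3 ≤ Fintype.card F) :
    ∃ H : Matrix (Fin r) (Fin s) F,
      (∀ i j, H i j ≠ 0 ↔ B i j = true) ∧ H.rank = s := by
  classical
  obtain ⟨f, hfinj, σ, hσ⟩ := hwp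
  -- square labeling with nonzero determinant
  obtain ⟨M', hM'lab, hM'det⟩ := diag_lemma F hF s (fun i j => B (f (σ i)) j)
    (fun t => hσ t)
  set M : Matrix (Fin s) (Fin s) F := M'.submatrix σ.symm id with hMdef
  have hMdet : M.det ≠ 0 := by
    rw [hMdef, Matrix.det_permute (σ.symm : Equiv.Perm (Fin s)) M']
    simp only [ne_eq, mul_eq_zero, not_or]
    refine ⟨?_, hM'det⟩
    rcases Int.units_eq_one_or (Equiv.Perm.sign σ.symm) with h | h <;> rw [h] <;> simp
  have hMlab : ∀ i j, M i j ≠ 0 ↔ B (f i) j = true := by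
    intro i j
    rw [hMdef]
    simp only [Matrix.submatrix_apply, id_eq]
    rw [hM'lab (σ.symm i) j]
    rw [Equiv.apply_symm_apply]
  -- extend to the full matrix
  set H : Matrix (Fin r) (Fin s) F := Matrix.of fun i j =>
    if h : ∃ t, f t = i then M h.choose j else (if B i j then 1 else 0) with hHdef
  have hHf : ∀ t j, H (f t) j = M t j := by
    intro t j
    have h : ∃ t', f t' = f t := ⟨t, rfl⟩
    have := h.choose_spec
    have ht : h.choose = t := hfinj this
    simp [hHdef, dif_pos h, ht]
  refine ⟨H, ?_, ?_⟩
  · intro i j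
    by_cases h : ∃ t, f t = i
    · obtain ⟨t, rfl⟩ := h
      rw [hHf t j]
      exact hMlab t j
    · simp only [hHdef, Matrix.of_apply, dif_neg h]
      by_cases hB : B i j = true <;> simp [hB]
  · refine le_antisymm (Matrix.rank_le_width H) ?_
    have hinj : Function.Injective H.mulVecLin := by
      rw [← LinearMap.ker_eq_bot, LinearMap.ker_eq_bot']
      intro v hv
      have hMv : M.mulVec v = 0 := by
        funext t
        have : H.mulVec v (f t) = 0 := congrFun hv (f t)
        show (fun j => M t j) ⬝ᵥ v = 0
        have heq : (fun j => M t j) = fun j => H (f t) j := by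
          funext j; rw [hHf t j]
        rw [heq]
        exact this
      have hU : IsUnit M := (Matrix.isUnit_iff_isUnit_det M).mpr (isUnit_iff_ne_zero.mpr hMdet)
      have := Matrix.mulVec_injective_iff_isUnit.mpr hU
      have h0 : M.mulVec 0 = 0 := Matrix.mulVec_zero M
      exact this (hMv.trans h0.symm)
    rw [Matrix.rank, LinearMap.finrank_range_of_inj hinj, Module.finrank_fin_fun]
end

section
/- Let B be a binary matrix and let J be a set of column indices with a(J) < |J| that is minimal with this property, i.e., no proper subset J' ⊊ J satisfies a(J') < |J'|. Then J is a stopping set of B: no row of B has exactly one entry equal to 1 among the columns of J. Consequently, every set J of columns with a(J) < |J| contains a nonempty subset J' that is a stopping set and satisfies a(J') < |J'|. -/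
/-!
Deleting a column `j` from `J` removes one column, and removes an active row whenever some row
meets `J` in `j` alone; so if a row had exactly one `1` on `J`, then `J.erase j` would again have
fewer active rows than columns, contradicting minimality. Every deficient `J` contains a minimal
deficient subset, which is then a nonempty stopping set.
-/

def activeCard {r n : ℕ} (B : Matrix (Fin r) (Fin n) Bool) (J : Finset (Fin n)) : ℕ :=
  (@Finset.filter (Fin r) (fun i : Fin r => ∃ j ∈ J, B i j = true)
    (fun _ => Finset.decidableExistsAndFinset) Finset.univ).card

open Finset

section StoppingSets

variable {r n : ℕ} (B : Matrix (Fin r) (Fin n) Bool)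

def Deficient (J : Finset (Fin n)) : Prop := activeCard B J < J.card

def IsStoppingSet (J : Finset (Fin n)) : Prop :=
  ∀ i : Fin r, (J.filter fun j => B i j = true).card ≠ 1

variable {B}

theorem activeCard_lt_activeCard {J' J : Finset (Fin n)} (hJ : J' ⊆ J) {i : Fin r}
    {j : Fin n} (hj : j ∈ J) (hij : B i j = true) (hi : ¬ ∃ k ∈ J', B i k = true) :
    activeCard B J' < activeCard B J := by
  refine card_lt_card ((ssubset_iff_of_subset ?_).mpr ⟨i, ?_, ?_⟩)
  · intro i' hi'
    simp only [mem_filter, mem_univ, true_and] at hi' ⊢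
    obtain ⟨k, hk, hik⟩ := hi'
    exact ⟨k, hJ hk, hik⟩
  · simp only [mem_filter, mem_univ, true_and]
    exact ⟨j, hj, hij⟩
  · simpa only [mem_filter, mem_univ, true_and] using hi

theorem Deficient.erase_of_filter_eq_singleton {J : Finset (Fin n)} {i : Fin r} {j : Fin n}
    (hJ : Deficient B J) (h : J.filter (fun k => B i k = true) = {j}) :
    Deficient B (J.erase j) := by
  have hj : j ∈ J ∧ B i j = true := mem_filter.mp (h ▸ mem_singleton_self j)
  have hi : ¬ ∃ k ∈ J.erase j, B i k = true := by
    rintro ⟨k, hk, hik⟩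
    have hkj : k ∈ J.filter (fun k => B i k = true) := mem_filter.mpr ⟨mem_of_mem_erase hk, hik⟩
    exact ne_of_mem_erase hk (mem_singleton.mp (h ▸ hkj))
  have hlt := activeCard_lt_activeCard (erase_subset j J) hj.1 hj.2 hi
  unfold Deficient at hJ ⊢
  rw [card_erase_of_mem hj.1]
  omega

theorem Deficient.nonempty {J : Finset (Fin n)} (hJ : Deficient B J) : J.Nonempty :=
  card_pos.mp (Nat.zero_lt_of_lt hJ)

theorem isStoppingSet_of_minimal_deficient {J : Finset (Fin n)} (hJ : Minimal (Deficient B) J) :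
    IsStoppingSet B J := by
  intro i hi
  obtain ⟨j, hj⟩ := card_eq_one.mp hi
  have hjJ : j ∈ J := (mem_filter.mp (hj ▸ mem_singleton_self j)).1
  exact hJ.not_lt (hJ.prop.erase_of_filter_eq_singleton hj) (erase_ssubset hjJ)

theorem Deficient.exists_isStoppingSet_subset {J : Finset (Fin n)} (hJ : Deficient B J) :
    ∃ J' ⊆ J, J'.Nonempty ∧ IsStoppingSet B J' ∧ Deficient B J' := by
  obtain ⟨J', hJ'J, hmin⟩ := exists_minimal_le_of_wellFoundedLT _ J hJ
  exact ⟨J', hJ'J, hmin.prop.nonempty, isStoppingSet_of_minimal_deficient hmin, hmin.prop⟩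

end StoppingSets

/-- A minimal column set `J` with fewer active rows than columns is
a stopping set (no row of `B` has exactly one `1` among the columns of `J`);
consequently every column set with fewer active rows than columns contains a
nonempty stopping set with the same deficiency property. -/
theorem minimal_deficient_is_stopping_and_contains_stopping {r n : ℕ}
    (B : Matrix (Fin r) (Fin n) Bool) :
    (∀ J : Finset (Fin n), activeCard B J < J.card →
      (∀ J' : Finset (Fin n), J' ⊂ J → ¬ activeCard B J' < J'.card) →
      ∀ i : Fin r, (J.filter fun j => B i j = true).card ≠ 1) ∧
    (∀ J : Finset (Fin n), activeCard B J < J.card →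
      ∃ J' ⊆ J, J'.Nonempty ∧
        (∀ i : Fin r, (J'.filter fun j => B i j = true).card ≠ 1) ∧
        activeCard B J' < J'.card) :=
  ⟨fun _ hJ hmin => isStoppingSet_of_minimal_deficient (minimal_iff_forall_lt.mpr ⟨hJ, hmin⟩),
    fun _ hJ => Deficient.exists_isStoppingSet_subset hJ⟩
end

section
/- (i) For every finite simple graph G and every set E' of edges of G, if the number of vertices incident to at least one edge of E' is strictly less than |E'|, then |E'| ≥ 5. (ii) For every r ≥ 4, the complete graph K_r contains a set of 5 edges incident to only 4 vertices (e.g., all edges among 4 fixed vertices minus one). Consequently, for the vertex–edge incidence matrix B of K_r with r ≥ 4 (a binary matrix with rows indexed by vertices and columns by edges), the minimum cardinality of a set J of columns with a(J) < |J| equals 5; hence the ultimate distance of the LDPC base matrix B is d_u(B) = 5. -/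
/-!
The edges of a simple graph covering only the vertices of a set `A` are distinct non-diagonal
pairs from `A`, so there are at most `C(#A, 2)` of them. Since `C(a, 2) ≤ a` for `a ≤ 3`, an edge
set with more edges than incident vertices covers at least four vertices and so has at least five
edges. Conversely `K₄` minus an edge has five edges on four vertices, and it embeds in `K_r`.
-/

open Finset

variable {α β : Type*}

/-- The active rows `a(J)` of the incidence matrix, for the column set `J = E`. -/
def incidentVertices [Fintype α] [DecidableEq α] (E : Finset (Sym2 α)) : Finset α :=
  univ.filter fun v => ∃ e ∈ E, v ∈ e

section incidentVertices

variable [Fintype α] [DecidableEq α]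

@[simp]
theorem mem_incidentVertices {E : Finset (Sym2 α)} {v : α} :
    v ∈ incidentVertices E ↔ ∃ e ∈ E, v ∈ e := by
  simp [incidentVertices]

theorem incidentVertices_image_sym2Map [Fintype β] [DecidableEq β] (f : α → β)
    (E : Finset (Sym2 α)) :
    incidentVertices (E.image (Sym2.map f)) = (incidentVertices E).image f := by
  ext v
  simp only [mem_incidentVertices, mem_image, exists_exists_and_eq_and, Sym2.mem_map]
  tauto

end incidentVertices

theorem Sym2.card_le_choose_two [DecidableEq α] {s : Finset α} {E : Finset (Sym2 α)}
    (hdiag : ∀ e ∈ E, ¬e.IsDiag) (hmem : ∀ e ∈ E, ∀ a ∈ e, a ∈ s) :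
    #E ≤ (#s).choose 2 := by
  rw [← Sym2.card_image_offDiag]
  refine card_le_card fun e he => ?_
  induction e using Sym2.ind with
  | h x y =>
    refine mem_image.2 ⟨(x, y), mem_offDiag.2 ⟨?_, ?_, ?_⟩, rfl⟩
    · exact hmem _ he x (Sym2.mem_mk_left x y)
    · exact hmem _ he y (Sym2.mem_mk_right x y)
    · exact fun hxy => hdiag _ he (Sym2.mk_isDiag_iff.2 hxy)

theorem Nat.four_le_of_lt_choose_two {n : ℕ} (h : n < n.choose 2) : 4 ≤ n := by
  by_contra! hn
  interval_cases n <;> simp [Nat.choose] at h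

namespace SimpleGraph

variable [Fintype α] [DecidableEq α]

theorem card_le_choose_two_card_incidentVertices {G : SimpleGraph α} {E : Finset (Sym2 α)}
    (hE : ↑E ⊆ G.edgeSet) : #E ≤ (#(incidentVertices E)).choose 2 :=
  Sym2.card_le_choose_two (fun _ he => G.not_isDiag_of_mem_edgeSet (hE he))
    fun e he _ ha => mem_incidentVertices.2 ⟨e, he, ha⟩

theorem five_le_card_of_card_incidentVertices_lt {G : SimpleGraph α} {E : Finset (Sym2 α)}
    (hE : ↑E ⊆ G.edgeSet) (h : #(incidentVertices E) < #E) : 5 ≤ #E := by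
  have h4 := Nat.four_le_of_lt_choose_two (h.trans_le (card_le_choose_two_card_incidentVertices hE))
  omega

theorem exists_card_eq_five_card_incidentVertices_eq_four (h : 4 ≤ Fintype.card α) :
    ∃ E : Finset (Sym2 α), ↑E ⊆ (⊤ : SimpleGraph α).edgeSet ∧ #E = 5 ∧
      #(incidentVertices E) = 4 := by
  obtain ⟨f⟩ : Nonempty (Fin 4 ↪ α) := by
    simpa using Function.Embedding.nonempty_of_card_le (α := Fin 4) (β := α) (by simpa using h)
  let K₄MinusEdge : Finset (Sym2 (Fin 4)) := {s(0, 1), s(0, 2), s(0, 3), s(1, 2), s(1, 3)}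
  refine ⟨K₄MinusEdge.image (Sym2.map f), ?_, ?_, ?_⟩
  · rw [coe_image]
    rintro _ ⟨e, he, rfl⟩
    rw [edgeSet_top, Set.mem_compl_iff, Sym2.mem_diagSet, Sym2.isDiag_map f.injective]
    revert e
    decide
  · rw [card_image_of_injective _ (Sym2.map.injective f.injective)]
    rfl
  · rw [incidentVertices_image_sym2Map, card_image_of_injective _ f.injective]
    decide

end SimpleGraph

/-- (i) In any finite simple graph, an edge set incident to fewer
vertices than its number of edges has at least 5 edges.  (ii) For `r ≥ 4` the
complete graph `K_r` contains 5 edges incident to only 4 vertices.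
Consequently, for `K_r` with `r ≥ 4` the minimum size of an edge (column) set
whose number of incident vertices (active rows of the incidence matrix) is
smaller than its cardinality equals 5; hence the ultimate distance of the
incidence base matrix is `d_u = 5`. -/
theorem complete_graph_incidence_ultimate_distance :
    (∀ (V : Type) [Fintype V] [DecidableEq V] (G : SimpleGraph V)
        (E' : Finset (Sym2 V)), ↑E' ⊆ G.edgeSet →
      (Finset.univ.filter fun v : V => ∃ e ∈ E', v ∈ e).card < E'.card →
      5 ≤ E'.card) ∧
    (∀ r : ℕ, 4 ≤ r →
      ∃ E' : Finset (Sym2 (Fin r)), ↑E' ⊆ (⊤ : SimpleGraph (Fin r)).edgeSet ∧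
        E'.card = 5 ∧
        (Finset.univ.filter fun v : Fin r => ∃ e ∈ E', v ∈ e).card = 4) ∧
    (∀ r : ℕ, 4 ≤ r →
      IsLeast {m : ℕ | ∃ E' : Finset (Sym2 (Fin r)),
        ↑E' ⊆ (⊤ : SimpleGraph (Fin r)).edgeSet ∧ E'.card = m ∧
        (Finset.univ.filter fun v : Fin r => ∃ e ∈ E', v ∈ e).card < m} 5) := by
  have witness (r : ℕ) (hr : 4 ≤ r) :=
    SimpleGraph.exists_card_eq_five_card_incidentVertices_eq_four (α := Fin r) (by simpa using hr)
  refine ⟨fun V _ _ G E' => SimpleGraph.five_le_card_of_card_incidentVertices_lt, witness,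
    fun r hr => ⟨?_, ?_⟩⟩
  · obtain ⟨E', hE', hcard, hinc⟩ := witness r hr
    exact ⟨E', hE', hcard, by unfold incidentVertices at hinc; omega⟩
  · rintro m ⟨E', hE', rfl, hlt⟩
    exact SimpleGraph.five_le_card_of_card_incidentVertices_lt hE' hlt
end
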